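/- Let Ω_{i-1} be symmetric positive definite, h ∈ ℝ^{2M}, α > 0, Ω_i = (Ω_{i-1}^{-1} + α h hᵀ)^{-1}, and let y be a random vector with E[y yᵀ] = Ω_i^{-1} - α h hᵀ. Then the residual r = σ² Ω_i y satisfies E[‖r‖²] = σ⁴ [Tr(Ω_i) - (Tr(Ω_{i-1}) - Tr(Ω_i)) / (1 + α hᵀ Ω_{i-1} h)]. -/

import Mathlib

/-! Since `E[y yᵀ] = Ωᵢ⁻¹ - α h hᵀ`, the second moment of `Ωᵢ y` is
`tr (Ωᵢ (Ωᵢ⁻¹ - α h hᵀ) Ωᵢᵀ) = tr Ωᵢ - α ‖Ωᵢ h‖²`. By Sherman–Morrison,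
`Ωᵢ = Ω_{i-1} - α / (1 + α d) • (Ω_{i-1} h)(Ω_{i-1} h)ᵀ` with `d = hᵀ Ω_{i-1} h`, so
`Ωᵢ h = Ω_{i-1} h / (1 + α d)` and `tr Ω_{i-1} - tr Ωᵢ = α ‖Ω_{i-1} h‖² / (1 + α d)`;
both corrections are multiples of `‖Ω_{i-1} h‖²`, which gives the formula. -/

open Matrix

open MeasureTheory

namespace Matrix

section ShermanMorrison

variable {n : Type*} [Fintype n] [DecidableEq n] {K : Type*} [Field K]

theorem inv_add_vecMulVec_mul_eq_one {A : Matrix n n K} (hA : IsUnit A.det) (u v : n → K)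
    (hs : 1 + v ⬝ᵥ A *ᵥ u ≠ 0) :
    (A⁻¹ + vecMulVec u v) * (A - (1 + v ⬝ᵥ A *ᵥ u)⁻¹ • vecMulVec (A *ᵥ u) (v ᵥ* A)) = 1 := by
  set s := v ⬝ᵥ A *ᵥ u
  have hcancel : (1 + s)⁻¹ + (1 + s)⁻¹ * s = 1 := by field_simp
  rw [add_mul, mul_sub, mul_sub, nonsing_inv_mul A hA, Matrix.mul_smul, Matrix.mul_smul,
    mul_vecMulVec, mulVec_mulVec, nonsing_inv_mul A hA, one_mulVec, vecMulVec_mul,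
    vecMulVec_mul_vecMulVec, vecMulVec_smul, smul_smul]
  linear_combination (norm := module) (-hcancel) • vecMulVec u (v ᵥ* A)

theorem inv_add_vecMulVec_inv_eq_sub {A : Matrix n n K} (hA : IsUnit A.det) (u v : n → K)
    (hs : 1 + v ⬝ᵥ A *ᵥ u ≠ 0) :
    (A⁻¹ + vecMulVec u v)⁻¹ = A - (1 + v ⬝ᵥ A *ᵥ u)⁻¹ • vecMulVec (A *ᵥ u) (v ᵥ* A) :=
  inv_eq_right_inv (inv_add_vecMulVec_mul_eq_one hA u v hs)

end ShermanMorrison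

theorem trace_mul_inv_sub_smul_vecMulVec_mul_transpose {n R : Type*} [Fintype n] [DecidableEq n]
    [CommRing R] {Ω : Matrix n n R} (hΩ : IsUnit Ω.det) (α : R) (h : n → R) :
    (Ω * (Ω⁻¹ - α • vecMulVec h h) * Ωᵀ).trace = Ω.trace - α * (Ω *ᵥ h ⬝ᵥ Ω *ᵥ h) := by
  rw [mul_sub, mul_nonsing_inv Ω hΩ, sub_mul, one_mul, Matrix.mul_smul, Matrix.smul_mul,
    mul_vecMulVec, vecMulVec_mul, vecMul_transpose, trace_sub, trace_transpose, trace_smul,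
    trace_vecMulVec, smul_eq_mul]

namespace PosDef

variable {n : Type*} [Fintype n] {A : Matrix n n ℝ}

theorem one_add_mul_dotProduct_mulVec_pos (hA : A.PosDef) (h : n → ℝ) {α : ℝ} (hα : 0 ≤ α) :
    0 < 1 + α * (h ⬝ᵥ A *ᵥ h) := by
  have := hA.posSemidef.dotProduct_mulVec_nonneg h
  simp only [star_trivial] at this
  positivity

theorem vecMul_eq_mulVec (hA : A.PosDef) (h : n → ℝ) : h ᵥ* A = A *ᵥ h := by
  rw [← vecMul_transpose, ← conjTranspose_eq_transpose_of_trivial, hA.isHermitian.eq]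

theorem one_add_dotProduct_mulVec_smul_ne_zero (hA : A.PosDef) (h : n → ℝ) {α : ℝ} (hα : 0 ≤ α) :
    1 + h ⬝ᵥ A *ᵥ (α • h) ≠ 0 := by
  rw [mulVec_smul, dotProduct_smul, smul_eq_mul]
  exact (hA.one_add_mul_dotProduct_mulVec_pos h hα).ne'

theorem isUnit_det_inv_add_smul_vecMulVec_self [DecidableEq n] (hA : A.PosDef) (h : n → ℝ)
    {α : ℝ} (hα : 0 ≤ α) : IsUnit (A⁻¹ + α • vecMulVec h h).det := by
  rw [← smul_vecMulVec]
  exact isUnit_det_of_right_inverse <| inv_add_vecMulVec_mul_eq_one hA.det_pos.ne'.isUnit _ _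
    (hA.one_add_dotProduct_mulVec_smul_ne_zero h hα)

theorem inv_add_smul_vecMulVec_self_eq_sub [DecidableEq n] (hA : A.PosDef) (h : n → ℝ) {α : ℝ}
    (hα : 0 ≤ α) :
    (A⁻¹ + α • vecMulVec h h)⁻¹ =
      A - (α / (1 + α * (h ⬝ᵥ A *ᵥ h))) • vecMulVec (A *ᵥ h) (A *ᵥ h) := by
  rw [← smul_vecMulVec, inv_add_vecMulVec_inv_eq_sub hA.det_pos.ne'.isUnit _ _
      (hA.one_add_dotProduct_mulVec_smul_ne_zero h hα), hA.vecMul_eq_mulVec, mulVec_smul,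
    dotProduct_smul, smul_eq_mul, smul_vecMulVec, smul_smul, inv_mul_eq_div]

theorem inv_add_smul_vecMulVec_self_mulVec [DecidableEq n] (hA : A.PosDef) (h : n → ℝ) {α : ℝ}
    (hα : 0 ≤ α) :
    (A⁻¹ + α • vecMulVec h h)⁻¹ *ᵥ h = (1 + α * (h ⬝ᵥ A *ᵥ h))⁻¹ • A *ᵥ h := by
  have hpos := hA.one_add_mul_dotProduct_mulVec_pos h hα
  rw [hA.inv_add_smul_vecMulVec_self_eq_sub h hα, sub_mulVec, smul_mulVec, vecMulVec_mulVec,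
    op_smul_eq_smul, smul_smul, dotProduct_comm (A *ᵥ h) h]
  match_scalars
  field_simp
  ring

theorem trace_sub_trace_inv_add_smul_vecMulVec_self [DecidableEq n] (hA : A.PosDef) (h : n → ℝ)
    {α : ℝ} (hα : 0 ≤ α) :
    A.trace - (A⁻¹ + α • vecMulVec h h)⁻¹.trace =
      α / (1 + α * (h ⬝ᵥ A *ᵥ h)) * (A *ᵥ h ⬝ᵥ A *ᵥ h) := by
  rw [hA.inv_add_smul_vecMulVec_self_eq_sub h hα, trace_sub, trace_smul, trace_vecMulVec,
    smul_eq_mul, sub_sub_cancel]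

end PosDef

end Matrix

section SecondMoment

variable {W m n : Type*} [MeasurableSpace W] {μ : Measure W} [Fintype m] [Fintype n]

theorem sum_sq_mulVec_eq_sum (P : Matrix m n ℝ) (x : n → ℝ) :
    ∑ i, (P *ᵥ x) i ^ 2 = ∑ i, ∑ j, ∑ k, P i j * P i k * (x j * x k) := by
  simp only [sq, mulVec, dotProduct, Finset.sum_mul_sum]
  exact Finset.sum_congr rfl fun _ _ => Finset.sum_congr rfl fun _ _ =>
    Finset.sum_congr rfl fun _ _ => by ring

theorem integral_sum_sq_mulVec {y : W → n → ℝ}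
    (hint : ∀ j k, Integrable (fun w => y w j * y w k) μ) {C : Matrix n n ℝ}
    (hC : ∀ j k, ∫ w, y w j * y w k ∂μ = C j k) (P : Matrix m n ℝ) :
    ∫ w, ∑ i, (P *ᵥ y w) i ^ 2 ∂μ = (P * C * Pᵀ).trace := by
  have hint' : ∀ i j k, Integrable (fun w => P i j * P i k * (y w j * y w k)) μ :=
    fun i j k => (hint j k).const_mul _
  simp_rw [sum_sq_mulVec_eq_sum]
  rw [integral_finsetSum _ fun i _ => integrable_finsetSum _ fun j _ =>
    integrable_finsetSum _ fun k _ => hint' i j k]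
  simp_rw [integral_finsetSum _ fun j _ => integrable_finsetSum _ fun k _ => hint' _ j k,
    integral_finsetSum _ fun k _ => hint' _ _ k, integral_const_mul, hC]
  simp only [trace, diag, mul_apply, transpose_apply, Finset.sum_mul]
  exact Finset.sum_congr rfl fun _ _ => Finset.sum_comm.trans <|
    Finset.sum_congr rfl fun _ _ => Finset.sum_congr rfl fun _ _ => by ring

end SecondMoment

theorem expected_residual_case3_general
    {M : ℕ} {W : Type*} [MeasurableSpace W] (μ : Measure W)
    (y : W → Fin (2 * M) → ℝ) (Omp : Matrix (Fin (2 * M)) (Fin (2 * M)) ℝ)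
    (h : Fin (2 * M) → ℝ) (α σ : ℝ) (hα : 0 < α) (hpd : Omp.PosDef)
    (hint : ∀ i j, Integrable (fun w => y w i * y w j) μ)
    (hcov : ∀ i j, ∫ w, y w i * y w j ∂μ =
      (((Omp⁻¹ + α • Matrix.vecMulVec h h)⁻¹)⁻¹ - α • Matrix.vecMulVec h h) i j) :
    ∫ w, ∑ i, ((σ ^ 2 • ((Omp⁻¹ + α • Matrix.vecMulVec h h)⁻¹).mulVec (y w)) i) ^ 2 ∂μ =
      σ ^ 4 * (((Omp⁻¹ + α • Matrix.vecMulVec h h)⁻¹).trace -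
        (Omp.trace - ((Omp⁻¹ + α • Matrix.vecMulVec h h)⁻¹).trace) /
          (1 + α * (h ⬝ᵥ Omp.mulVec h))) := by
  have hB := hpd.isUnit_det_inv_add_smul_vecMulVec_self h hα.le
  have hpos := hpd.one_add_mul_dotProduct_mulVec_pos h hα.le
  simp_rw [← smul_mulVec]
  rw [integral_sum_sq_mulVec hint hcov, transpose_smul, Matrix.smul_mul, Matrix.mul_smul,
    Matrix.smul_mul, trace_smul, trace_smul, trace_mul_inv_sub_smul_vecMulVec_mul_transpose
      (isUnit_nonsing_inv_det _ hB), hpd.inv_add_smul_vecMulVec_self_mulVec h hα.le,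
    hpd.trace_sub_trace_inv_add_smul_vecMulVec_self h hα.le]
  simp only [smul_dotProduct, dotProduct_smul, smul_eq_mul]
  field_simp

/-- Case 3 of Proposition 1: with `Ωᵢ = (Ω_{i-1}⁻¹ + α h hᵀ)⁻¹` and
`E[y yᵀ] = Ωᵢ⁻¹ - α h hᵀ`, the residual `r = σ² Ωᵢ y` satisfies
`E[‖r‖²] = σ⁴ [Tr(Ωᵢ) - (Tr(Ω_{i-1}) - Tr(Ωᵢ)) / (1 + α hᵀ Ω_{i-1} h)]`. -/
theorem expected_residual_case3
    {M : ℕ} {W : Type*} [MeasurableSpace W] (μ : Measure W) [IsProbabilityMeasure μ]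
    (y : W → Fin (2 * M) → ℝ) (Omp : Matrix (Fin (2 * M)) (Fin (2 * M)) ℝ)
    (h : Fin (2 * M) → ℝ) (α σ : ℝ) (hα : 0 < α) (hσ : 0 < σ) (hpd : Omp.PosDef)
    (hint : ∀ i j, Integrable (fun w => y w i * y w j) μ)
    (hcov : ∀ i j, ∫ w, y w i * y w j ∂μ =
      (((Omp⁻¹ + α • Matrix.vecMulVec h h)⁻¹)⁻¹ - α • Matrix.vecMulVec h h) i j) :
    ∫ w, ∑ i, ((σ ^ 2 • ((Omp⁻¹ + α • Matrix.vecMulVec h h)⁻¹).mulVec (y w)) i) ^ 2 ∂μ =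
      σ ^ 4 * (((Omp⁻¹ + α • Matrix.vecMulVec h h)⁻¹).trace -
        (Omp.trace - ((Omp⁻¹ + α • Matrix.vecMulVec h h)⁻¹).trace) /
          (1 + α * (h ⬝ᵥ Omp.mulVec h))) :=
  expected_residual_case3_general μ y Omp h α σ hα hpd hint hcov
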